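/- arXiv:1602.08204 — 9 statements merged into one kernel-verified Lean document; each statement's English description precedes it below -/
import Mathlib

section
/- Suppose 𝒜 × ℬ ⊆ 𝒳 × 𝒴 is solvable for (S,f). Then for any positive integer n and any sequences x ∈ 𝒜ⁿ, y ∈ ℬⁿ with (xᵢ,yᵢ) ∈ S for all 1 ≤ i ≤ n, the following holds: any two joint types P⁽¹⁾, P⁽²⁾ ∈ 𝒫ₙ(𝒜 × ℬ) with supp(P⁽ʲ⁾) ⊆ S for j = 1,2 that both have 𝒜-marginal equal to the type P_x (i.e., Σ_{y∈ℬ} P⁽ʲ⁾(x,y) = P_x(x) for all x ∈ 𝒜) and ℬ-marginal equal to the type P_y (i.e., Σ_{x∈𝒜} P⁽ʲ⁾(x,y) = P_y(y) for all y ∈ ℬ) must satisfy, for every v ∈ 𝒱, Σ_{(x,y)∈𝒜×ℬ : f(x,y)=v} P⁽¹⁾(x,y) = Σ_{(x,y)∈𝒜×ℬ : f(x,y)=v} P⁽²⁾(x,y). Consequently, the type fₙ^t(x,y) of fₙ(x,y) = (f(x₁,y₁),…,f(xₙ,yₙ)) is uniquely determined by the marginal types P_x and P_y. -/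
/-!
STATEMENT 8: If `𝒜 × ℬ` is solvable for `(S,f)`, then for sequences `x ∈ 𝒜ⁿ`,
`y ∈ ℬⁿ` with `(xᵢ,yᵢ) ∈ S` for all i, any two joint types supported on
`(𝒜 × ℬ) ∩ S` whose marginals are the types of `x` and `y` have the same
f-pushforward; consequently the type of `fₙ(x,y)` is determined by the marginal
types of `x` and `y`.

Joint types in `𝒫ₙ(𝒜 × ℬ)` are encoded by their count functions `N : X → Y → ℕ`.
-/

open Finset

namespace Stmt8

/-- The balanced condition `|I₊(v)| = |I₋(v)|` for a simple loop. -/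
def Balanced {X Y V : Type} (f : X → Y → V) {m : ℕ}
    (a : ZMod m → X) (b : ZMod m → Y) : Prop :=
  ∀ v : V, {i : ZMod m | f (a i) (b i) = v}.ncard
    = {i : ZMod m | f (a i) (b (i + 1)) = v}.ncard

/-- `A × B` is solvable for `(S, f)`: every simple loop of `A × B` contained in
`S` is balanced. -/
def Solvable {X Y V : Type} (S : Set (X × Y)) (f : X → Y → V)
    (A : Set X) (B : Set Y) : Prop :=
  ∀ (m : ℕ), 2 ≤ m → ∀ (a : ZMod m → X) (b : ZMod m → Y),
    Function.Injective a → Function.Injective b →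
    (∀ i, a i ∈ A) → (∀ i, b i ∈ B) →
    (∀ i, (a i, b i) ∈ S) → (∀ i, (a i, b (i + 1)) ∈ S) →
    Balanced f a b


set_option linter.unusedSectionVars false

section Aux
variable {X Y V : Type} [Fintype X] [Fintype Y] [DecidableEq X] [DecidableEq Y]
  [DecidableEq V]


variable {X Y : Type} [Fintype X] [Fintype Y] [DecidableEq X] [DecidableEq Y]

lemma exists_neg_in_row (D : X → Y → ℤ) (hrow : ∀ a, ∑ b, D a b = 0)
    {a : X} {b : Y} (h : 0 < D a b) : ∃ b', D a b' < 0 := by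
  by_contra hc
  push_neg at hc
  have hpos : 0 < ∑ b', D a b' :=
    Finset.sum_pos' (fun b' _ => hc b') ⟨b, mem_univ b, h⟩
  rw [hrow] at hpos
  exact lt_irrefl _ hpos

lemma exists_pos_in_col (D : X → Y → ℤ) (hcol : ∀ b, ∑ a, D a b = 0)
    {a : X} {b : Y} (h : D a b < 0) : ∃ a', 0 < D a' b := by
  by_contra hc
  push_neg at hc
  have hneg : ∑ a', D a' b < 0 :=
    Finset.sum_neg' (fun a' _ => hc a') ⟨a, mem_univ a, h⟩
  rw [hcol] at hneg
  exact lt_irrefl _ hneg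

lemma exists_loop (D : X → Y → ℤ) (hrow : ∀ a, ∑ b, D a b = 0)
    (hcol : ∀ b, ∑ a, D a b = 0) {a₀ : X} {b₀ : Y} (h₀ : 0 < D a₀ b₀) :
    ∃ (m : ℕ), 2 ≤ m ∧ ∃ (A : ZMod m → X) (B : ZMod m → Y),
      Function.Injective A ∧ Function.Injective B ∧
      (∀ i, 0 < D (A i) (B i)) ∧ (∀ i, D (A i) (B (i+1)) < 0) := by
  classical
  -- step function
  have step : ∀ p : X × Y, 0 < D p.1 p.2 →
      ∃ q : X × Y, 0 < D q.1 q.2 ∧ D p.1 q.2 < 0 := by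
    rintro ⟨a, b⟩ h
    obtain ⟨b', hb'⟩ := exists_neg_in_row D hrow h
    obtain ⟨a', ha'⟩ := exists_pos_in_col D hcol hb'
    exact ⟨(a', b'), ha', hb'⟩
  set F : {p : X × Y // 0 < D p.1 p.2} → {p : X × Y // 0 < D p.1 p.2} :=
    fun p => ⟨(step p.1 p.2).choose, (step p.1 p.2).choose_spec.1⟩ with hF
  set w : ℕ → {p : X × Y // 0 < D p.1 p.2} :=
    fun k => F^[k] ⟨(a₀, b₀), h₀⟩ with hwdef
  set a : ℕ → X := fun k => (w k).1.1 with ha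
  set b : ℕ → Y := fun k => (w k).1.2 with hb
  have hw : ∀ k, w (k+1) = F (w k) := fun k => Function.iterate_succ_apply' F k _
  have hpos : ∀ k, 0 < D (a k) (b k) := fun k => (w k).2
  have hneg : ∀ k, D (a k) (b (k+1)) < 0 := by
    intro k
    have hspec := (step (w k).1 (w k).2).choose_spec.2
    have h1 : (w (k+1)).1 = (step (w k).1 (w k).2).choose := by rw [hw]
    show D (w k).1.1 (w (k+1)).1.2 < 0
    rw [h1]; exact hspec
  have hab : ∀ k, a (k+1) ≠ a k := by
    intro k h
    have h1 := hpos (k+1)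
    have h2 := hneg k
    rw [h] at h1
    exact lt_irrefl _ (h1.trans h2)
  have hbb : ∀ k, b (k+1) ≠ b k := by
    intro k h
    have h1 := hpos k
    have h2 := hneg k
    rw [h] at h2
    exact lt_irrefl _ (h1.trans h2)
  -- pigeonhole
  have hP : ∃ k, (∃ j < k, a j = a k) ∨ (∃ j < k, b j = b k) := by
    obtain ⟨i, j, hij, hmap⟩ := Fintype.exists_ne_map_eq_of_card_lt
      (fun i : Fin (Fintype.card X + 1) => a i) (by simp)
    rcases lt_or_gt_of_ne hij with h | h
    · exact ⟨j, Or.inl ⟨i, h, hmap⟩⟩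
    · exact ⟨i, Or.inl ⟨j, h, hmap.symm⟩⟩
  set k := Nat.find hP with hkdef
  have hkP := Nat.find_spec hP
  have hmin : ∀ p, p < k → ¬((∃ j < p, a j = a p) ∨ (∃ j < p, b j = b p)) :=
    fun p hp => Nat.find_min hP hp
  have hadist : ∀ p q, p < q → q < k → a p ≠ a q :=
    fun p q hpq hq h => hmin q hq (Or.inl ⟨p, hpq, h⟩)
  have hbdist : ∀ p q, p < q → q < k → b p ≠ b q :=
    fun p q hpq hq h => hmin q hq (Or.inr ⟨p, hpq, h⟩)
  have haInj : ∀ p q, p < k → q < k → a p = a q → p = q := by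
    intro p q hp hq h
    rcases Nat.lt_trichotomy p q with h' | h' | h'
    · exact absurd h (hadist p q h' hq)
    · exact h'
    · exact absurd h.symm (hadist q p h' hp)
  have hbInj : ∀ p q, p < k → q < k → b p = b q → p = q := by
    intro p q hp hq h
    rcases Nat.lt_trichotomy p q with h' | h' | h'
    · exact absurd h (hbdist p q h' hq)
    · exact h'
    · exact absurd h.symm (hbdist q p h' hp)
  have hkP' : (∃ j < k, a j = a k) ∨ ∃ j < k, b j = b k := hkP
  have hk1 : 1 ≤ k := by
    rcases hkP' with ⟨j, hj, _⟩ | ⟨j, hj, _⟩ <;> omega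
  by_cases hcase : ∃ j < k, b j = b k
  · -- column repeat case
    obtain ⟨j, hjk, hbj⟩ := hcase
    have hjne : j ≠ k - 1 := by
      intro h
      apply hbb (k-1)
      rw [show k - 1 + 1 = k by omega, ← h, hbj]
    set m := k - j with hm
    have hm2 : 2 ≤ m := by omega
    haveI : NeZero m := ⟨by omega⟩
    refine ⟨m, hm2, fun i => a (j + i.val), fun i => b (j + i.val), ?_, ?_, ?_, ?_⟩
    · intro i₁ i₂ h
      have h1 : i₁.val < m := ZMod.val_lt i₁
      have h2 : i₂.val < m := ZMod.val_lt i₂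
      have := haInj (j + i₁.val) (j + i₂.val) (by omega) (by omega) h
      exact ZMod.val_injective m (by omega)
    · intro i₁ i₂ h
      have h1 : i₁.val < m := ZMod.val_lt i₁
      have h2 : i₂.val < m := ZMod.val_lt i₂
      have := hbInj (j + i₁.val) (j + i₂.val) (by omega) (by omega) h
      exact ZMod.val_injective m (by omega)
    · exact fun i => hpos (j + i.val)
    · intro i
      have h1 : i.val < m := ZMod.val_lt i
      have hval : (i + 1).val = (i.val + 1) % m := by
        rw [ZMod.val_add, ZMod.val_one_eq_one_mod, Nat.one_mod_eq_one.mpr (by omega)]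
      show D (a (j + i.val)) (b (j + (i + 1).val)) < 0
      rcases Nat.lt_or_ge (i.val + 1) m with hlt | hge
      · rw [hval, Nat.mod_eq_of_lt hlt, show j + (i.val + 1) = (j + i.val) + 1 by omega]
        exact hneg (j + i.val)
      · have hieq : i.val + 1 = m := by omega
        rw [hval, hieq, Nat.mod_self, Nat.add_zero, hbj,
          show k = (j + i.val) + 1 by omega]
        exact hneg (j + i.val)
  · -- row repeat case
    have hcase' : ∀ j < k, b j ≠ b k := by
      intro j hj h
      exact hcase ⟨j, hj, h⟩
    have hbInj' : ∀ p q, p ≤ k → q ≤ k → b p = b q → p = q := by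
      intro p q hp hq h
      rcases Nat.lt_or_ge p k with hp' | hp'
      · rcases Nat.lt_or_ge q k with hq' | hq'
        · exact hbInj p q hp' hq' h
        · exact absurd (h.trans (by rw [show q = k by omega])) (hcase' p hp')
      · rcases Nat.lt_or_ge q k with hq' | hq'
        · exact absurd (h.symm.trans (by rw [show p = k by omega])) (hcase' q hq')
        · omega
    obtain ⟨j, hjk, haj⟩ : ∃ j < k, a j = a k := by
      rcases hkP' with h | ⟨j, hj, h⟩
      · exact h
      · exact absurd h (hcase' j hj)
    have hjne : j ≠ k - 1 := by
      intro h
      apply hab (k-1)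
      rw [show k - 1 + 1 = k by omega, ← haj, h]
    set m := k - j with hm
    have hm2 : 2 ≤ m := by omega
    haveI : NeZero m := ⟨by omega⟩
    set c : ZMod m := ((m - 1 : ℕ) : ZMod m) with hc
    have hcval : c.val = m - 1 := by
      rw [hc, ZMod.val_natCast, Nat.mod_eq_of_lt (by omega)]
    have hshift : ∀ i : ZMod m, (i + c).val = (i.val + (m - 1)) % m := by
      intro i
      rw [ZMod.val_add, hcval]
    have hshiftval : ∀ t : ℕ, t < m → (t + (m - 1)) % m = if t = 0 then m - 1 else t - 1 := by
      intro t ht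
      rcases Nat.eq_zero_or_pos t with h | h
      · rw [h, if_pos rfl, Nat.zero_add, Nat.mod_eq_of_lt (by omega)]
      · rw [if_neg (by omega), show t + (m-1) = m + (t-1) by omega,
          Nat.add_mod_left, Nat.mod_eq_of_lt (by omega)]
    set C : ZMod m → Y := fun i => b (j + 1 + (i + c).val) with hC
    have hsucc : ∀ i : ZMod m, C (i + 1) = b (j + 1 + i.val) := by
      intro i
      have : i + 1 + c = i := by
        rw [hc, add_assoc, ← Nat.cast_one, ← Nat.cast_add,
          show 1 + (m - 1) = m by omega, ZMod.natCast_self, add_zero]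
      rw [hC]
      simp only [this]
    refine ⟨m, hm2, fun i => a (j + i.val), C, ?_, ?_, ?_, ?_⟩
    · intro i₁ i₂ h
      have h1 : i₁.val < m := ZMod.val_lt i₁
      have h2 : i₂.val < m := ZMod.val_lt i₂
      have := haInj (j + i₁.val) (j + i₂.val) (by omega) (by omega) h
      exact ZMod.val_injective m (by omega)
    · intro i₁ i₂ h
      have h1 : i₁.val < m := ZMod.val_lt i₁
      have h2 : i₂.val < m := ZMod.val_lt i₂
      rw [hC] at h
      have hv1 : (i₁ + c).val = if i₁.val = 0 then m - 1 else i₁.val - 1 := by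
        rw [hshift, hshiftval _ h1]
      have hv2 : (i₂ + c).val = if i₂.val = 0 then m - 1 else i₂.val - 1 := by
        rw [hshift, hshiftval _ h2]
      have hb1 : (i₁ + c).val < m := ZMod.val_lt _
      have hb2 : (i₂ + c).val < m := ZMod.val_lt _
      have := hbInj' (j + 1 + (i₁ + c).val) (j + 1 + (i₂ + c).val)
        (by omega) (by omega) h
      apply ZMod.val_injective m
      split_ifs at hv1 hv2 <;> omega
    · intro i
      have h1 : i.val < m := ZMod.val_lt i
      show 0 < D (a (j + i.val)) (b (j + 1 + (i + c).val))
      rw [hshift, hshiftval _ h1]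
      rcases Nat.eq_zero_or_pos i.val with h | h
      · rw [h, if_pos rfl, show j + 1 + (m - 1) = k by omega, Nat.add_zero, haj]
        exact hpos k
      · rw [if_neg (by omega), show j + 1 + (i.val - 1) = j + i.val by omega]
        exact hpos (j + i.val)
    · intro i
      rw [hsucc]
      show D (a (j + i.val)) (b (j + 1 + i.val)) < 0
      rw [show j + 1 + i.val = (j + i.val) + 1 by omega]
      exact hneg (j + i.val)


lemma key (S : Set (X × Y)) (f : X → Y → V) (A : Set X) (B : Set Y)
    (hsolv : Solvable S f A B) :
    ∀ (t : ℕ) (D : X → Y → ℤ),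
      (∑ a, ∑ b, (D a b).natAbs) ≤ t →
      (∀ a b, D a b ≠ 0 → (a, b) ∈ S ∧ a ∈ A ∧ b ∈ B) →
      (∀ a, ∑ b, D a b = 0) → (∀ b, ∑ a, D a b = 0) →
      ∀ v, (∑ a, ∑ b, if f a b = v then D a b else 0) = 0 := by
  intro t
  induction t with
  | zero =>
    intro D hle _ _ _ v
    have h0 : (∑ a, ∑ b, (D a b).natAbs) = 0 := Nat.le_zero.mp hle
    have hz : ∀ a b, D a b = 0 := by
      intro a b
      have h1 := (Finset.sum_eq_zero_iff).mp h0 a (mem_univ a)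
      have h2 := (Finset.sum_eq_zero_iff).mp h1 b (mem_univ b)
      omega
    simp [hz]
  | succ t ih =>
    intro D hle hsupp hrow hcol v
    by_cases hz : ∀ a b, D a b = 0
    · simp [hz]
    · push_neg at hz
      obtain ⟨a₁, b₁, hab1⟩ := hz
      -- find a positive cell
      obtain ⟨a₂, b₂, h₂⟩ : ∃ a b, 0 < D a b := by
        rcases lt_or_gt_of_ne hab1 with h | h
        · obtain ⟨a', ha'⟩ := exists_pos_in_col D hcol h
          exact ⟨a', b₁, ha'⟩
        · exact ⟨a₁, b₁, h⟩
      obtain ⟨m, hm2, Aa, Bb, hAinj, hBinj, hpos, hneg⟩ :=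
        exists_loop D hrow hcol h₂
      haveI : NeZero m := ⟨by omega⟩
      have hone : (1 : ZMod m) ≠ 0 := by
        intro h
        have := congrArg ZMod.val h
        rw [ZMod.val_zero, ZMod.val_one_eq_one_mod, Nat.one_mod_eq_one.mpr (by omega)] at this
        omega
      have hne1 : ∀ i : ZMod m, i + 1 ≠ i := by
        intro i h
        exact hone (by linear_combination h - i)
      have hBne : ∀ i : ZMod m, Bb (i + 1) ≠ Bb i :=
        fun i h => hne1 i (hBinj h)
      -- loop membership facts
      have hSp : ∀ i, (Aa i, Bb i) ∈ S := fun i => (hsupp _ _ (hpos i).ne').1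
      have hSn : ∀ i, (Aa i, Bb (i+1)) ∈ S := fun i => (hsupp _ _ (hneg i).ne).1
      have hAmem : ∀ i, Aa i ∈ A := fun i => (hsupp _ _ (hpos i).ne').2.1
      have hBmem : ∀ i, Bb i ∈ B := fun i => (hsupp _ _ (hpos i).ne').2.2
      have hbal : Balanced f Aa Bb :=
        hsolv m hm2 Aa Bb hAinj hBinj hAmem hBmem hSp hSn
      -- the loop matrix
      set L : X → Y → ℤ := fun p q => ∑ i : ZMod m,
        (if Aa i = p then 1 else 0) *
          ((if Bb i = q then (1:ℤ) else 0) - (if Bb (i+1) = q then 1 else 0)) with hL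
      have hLpos : ∀ i, L (Aa i) (Bb i) = 1 := by
        intro i₀
        simp only [hL]
        rw [Finset.sum_eq_single i₀]
        · simp [hBne i₀]
        · intro i _ hi
          have : Aa i ≠ Aa i₀ := fun h => hi (hAinj h)
          simp [this]
        · simp
      have hLneg : ∀ i, L (Aa i) (Bb (i+1)) = -1 := by
        intro i₀
        simp only [hL]
        rw [Finset.sum_eq_single i₀]
        · simp [(hBne i₀).symm]
        · intro i _ hi
          have : Aa i ≠ Aa i₀ := fun h => hi (hAinj h)
          simp [this]
        · simp
      have hLzero : ∀ p q, (¬ ∃ i, Aa i = p ∧ Bb i = q) →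
          (¬ ∃ i, Aa i = p ∧ Bb (i+1) = q) → L p q = 0 := by
        intro p q h1 h2
        simp only [hL]
        apply Finset.sum_eq_zero
        intro i _
        by_cases hA : Aa i = p
        · have hb1 : Bb i ≠ q := fun h => h1 ⟨i, hA, h⟩
          have hb2 : Bb (i+1) ≠ q := fun h => h2 ⟨i, hA, h⟩
          simp [hb1, hb2]
        · simp [hA]
      have hnotboth : ∀ p q, (∃ i, Aa i = p ∧ Bb i = q) →
          (∃ i, Aa i = p ∧ Bb (i+1) = q) → False := by
        rintro p q ⟨i, hi1, hi2⟩ ⟨i', hi1', hi2'⟩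
        have : i = i' := hAinj (hi1.trans hi1'.symm)
        subst this
        exact hBne i (hi2'.trans hi2.symm)
      -- key pointwise facts
      have hdec : ∀ p q, (D p q - L p q).natAbs ≤ (D p q).natAbs := by
        intro p q
        by_cases h1 : ∃ i, Aa i = p ∧ Bb i = q
        · obtain ⟨i, hi1, hi2⟩ := h1
          have hL1 : L p q = 1 := by rw [← hi1, ← hi2]; exact hLpos i
          have hD1 : 0 < D p q := by rw [← hi1, ← hi2]; exact hpos i
          omega
        · by_cases h2 : ∃ i, Aa i = p ∧ Bb (i+1) = q
          · obtain ⟨i, hi1, hi2⟩ := h2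
            have hL1 : L p q = -1 := by rw [← hi1, ← hi2]; exact hLneg i
            have hD1 : D p q < 0 := by rw [← hi1, ← hi2]; exact hneg i
            omega
          · rw [hLzero p q h1 h2]
            omega
      have hsupp' : ∀ p q, D p q - L p q ≠ 0 → D p q ≠ 0 := by
        intro p q h hD
        apply h
        rw [hD]
        by_cases h1 : ∃ i, Aa i = p ∧ Bb i = q
        · obtain ⟨i, hi1, hi2⟩ := h1
          have := hpos i; rw [hi1, hi2, hD] at this; omega
        · by_cases h2 : ∃ i, Aa i = p ∧ Bb (i+1) = q
          · obtain ⟨i, hi1, hi2⟩ := h2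
            have := hneg i; rw [hi1, hi2, hD] at this; omega
          · rw [hLzero p q h1 h2]; ring
      -- marginals of L
      have hLrow : ∀ p, ∑ q, L p q = 0 := by
        intro p
        simp only [hL]
        rw [Finset.sum_comm]
        apply Finset.sum_eq_zero
        intro i _
        rw [← Finset.mul_sum]
        rw [Finset.sum_sub_distrib]
        simp [Finset.sum_ite_eq]
      have hLcol : ∀ q, ∑ p, L p q = 0 := by
        intro q
        simp only [hL]
        rw [Finset.sum_comm]
        have : ∀ i : ZMod m, ∑ p, (if Aa i = p then (1:ℤ) else 0) *
            ((if Bb i = q then (1:ℤ) else 0) - (if Bb (i+1) = q then 1 else 0))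
            = ((if Bb i = q then (1:ℤ) else 0) - (if Bb (i+1) = q then 1 else 0)) := by
          intro i
          rw [← Finset.sum_mul]
          simp [Finset.sum_ite_eq]
        rw [Finset.sum_congr rfl fun i _ => this i]
        rw [Finset.sum_sub_distrib]
        rw [sub_eq_zero]
        exact (Fintype.sum_equiv (Equiv.addRight (1 : ZMod m)) _ _ (fun i => rfl)).symm
      -- pushforward of L vanishes
      have hLpush : (∑ p, ∑ q, if f p q = v then L p q else 0) = 0 := by
        set G : X → Y → ZMod m → ℤ := fun p q i =>
          (if Aa i = p ∧ Bb i = q ∧ f p q = v then (1:ℤ) else 0)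
          - (if Aa i = p ∧ Bb (i+1) = q ∧ f p q = v then 1 else 0) with hG
        have hpt : ∀ p q, (if f p q = v then L p q else 0) = ∑ i : ZMod m, G p q i := by
          intro p q
          by_cases hfv : f p q = v
          · rw [if_pos hfv]
            simp only [hL, hG]
            apply Finset.sum_congr rfl
            intro i _
            by_cases hA : Aa i = p <;> by_cases hb1 : Bb i = q <;>
              by_cases hb2 : Bb (i+1) = q <;> simp [hA, hb1, hb2, hfv]
          · rw [if_neg hfv]
            symm
            apply Finset.sum_eq_zero
            intro i _
            simp [hG, hfv]
        have hfiber : ∀ i : ZMod m, (∑ p, ∑ q, G p q i)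
            = (if f (Aa i) (Bb i) = v then (1:ℤ) else 0)
              - (if f (Aa i) (Bb (i+1)) = v then 1 else 0) := by
          intro i
          have e1 : (∑ p, ∑ q, if Aa i = p ∧ Bb i = q ∧ f p q = v then (1:ℤ) else 0)
              = if f (Aa i) (Bb i) = v then (1:ℤ) else 0 := by
            simp [ite_and, Finset.sum_ite_eq]
          have e2 : (∑ p, ∑ q, if Aa i = p ∧ Bb (i+1) = q ∧ f p q = v then (1:ℤ) else 0)
              = if f (Aa i) (Bb (i+1)) = v then (1:ℤ) else 0 := by
            simp [ite_and, Finset.sum_ite_eq]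
          calc (∑ p, ∑ q, G p q i)
              = (∑ p, ∑ q, if Aa i = p ∧ Bb i = q ∧ f p q = v then (1:ℤ) else 0)
                - (∑ p, ∑ q, if Aa i = p ∧ Bb (i+1) = q ∧ f p q = v then 1 else 0) := by
                simp only [hG, Finset.sum_sub_distrib]
            _ = _ := by rw [e1, e2]
        have hswap : (∑ p, ∑ q, if f p q = v then L p q else 0)
            = ∑ i : ZMod m, ((if f (Aa i) (Bb i) = v then (1:ℤ) else 0)
              - (if f (Aa i) (Bb (i+1)) = v then 1 else 0)) := by
          calc (∑ p, ∑ q, if f p q = v then L p q else 0)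
              = ∑ p, ∑ q, ∑ i : ZMod m, G p q i :=
                Finset.sum_congr rfl fun p _ => Finset.sum_congr rfl fun q _ => hpt p q
            _ = ∑ p, ∑ i : ZMod m, ∑ q, G p q i :=
                Finset.sum_congr rfl fun p _ => Finset.sum_comm
            _ = ∑ i : ZMod m, ∑ p, ∑ q, G p q i := Finset.sum_comm
            _ = _ := Finset.sum_congr rfl fun i _ => hfiber i
        have hcard := hbal v
        rw [Set.ncard_eq_toFinset_card', Set.toFinset_setOf,
          Set.ncard_eq_toFinset_card', Set.toFinset_setOf] at hcard
        rw [hswap, Finset.sum_sub_distrib, Finset.sum_boole, Finset.sum_boole, hcard, sub_self]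
      -- the smaller matrix
      set D' : X → Y → ℤ := fun p q => D p q - L p q with hD'
      have hstep : (∑ a, ∑ b, (D' a b).natAbs) < ∑ a, ∑ b, (D a b).natAbs := by
        apply Finset.sum_lt_sum
        · intro p _
          exact Finset.sum_le_sum fun q _ => hdec p q
        · refine ⟨Aa 0, mem_univ _, ?_⟩
          apply Finset.sum_lt_sum
          · intro q _
            exact hdec _ q
          · refine ⟨Bb 0, mem_univ _, ?_⟩
            have h1 := hpos 0
            have h2 := hLpos 0
            simp only [hD']
            rw [h2]
            omega
      have hIH := ih D' (by omega) (fun p q h => hsupp p q (hsupp' p q h))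
        (fun p => by
          simp only [hD']
          rw [Finset.sum_sub_distrib, hrow, hLrow, sub_zero])
        (fun q => by
          simp only [hD']
          rw [Finset.sum_sub_distrib, hcol, hLcol, sub_zero]) v
      have hsplit : (∑ a, ∑ b, if f a b = v then D a b else 0)
          = (∑ a, ∑ b, if f a b = v then D' a b else 0)
            + (∑ a, ∑ b, if f a b = v then L a b else 0) := by
        have hptw : ∀ p q, (if f p q = v then D p q else 0)
            = (if f p q = v then D' p q else 0) + (if f p q = v then L p q else 0) := by
          intro p q
          simp only [hD']
          split_ifs <;> ring
        simp only [hptw, Finset.sum_add_distrib]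
      rw [hsplit, hIH, hLpush, add_zero]


lemma key_nat (S : Set (X × Y)) (f : X → Y → V) (A : Set X) (B : Set Y)
    (hsolv : Solvable S f A B) (N M : X → Y → ℕ)
    (hsN : ∀ a b, N a b ≠ 0 → (a, b) ∈ S ∧ a ∈ A ∧ b ∈ B)
    (hsM : ∀ a b, M a b ≠ 0 → (a, b) ∈ S ∧ a ∈ A ∧ b ∈ B)
    (hrow : ∀ a, ∑ b, N a b = ∑ b, M a b) (hcol : ∀ b, ∑ a, N a b = ∑ a, M a b) :
    ∀ v, (∑ a, ∑ b, if f a b = v then N a b else 0)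
      = ∑ a, ∑ b, if f a b = v then M a b else 0 := by
  intro v
  have h := key S f A B hsolv (∑ a, ∑ b, (((N a b : ℤ)) - M a b).natAbs)
    (fun a b => (N a b : ℤ) - M a b) le_rfl
    (fun a b h => by
      have hor : N a b ≠ 0 ∨ M a b ≠ 0 := by
        by_contra hc
        push_neg at hc
        simp [hc.1, hc.2] at h
      rcases hor with h' | h'
      · exact hsN a b h'
      · exact hsM a b h')
    (fun a => by
      rw [Finset.sum_sub_distrib, ← Nat.cast_sum, ← Nat.cast_sum, hrow a, sub_self])
    (fun b => by
      rw [Finset.sum_sub_distrib, ← Nat.cast_sum, ← Nat.cast_sum, hcol b, sub_self]) v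
  have hptw : ∀ p q, (if f p q = v then ((N p q : ℤ) - M p q) else 0)
      = (if f p q = v then (N p q : ℤ) else 0) - (if f p q = v then (M p q : ℤ) else 0) := by
    intro p q
    split_ifs <;> ring
  simp only [hptw, Finset.sum_sub_distrib, sub_eq_zero] at h
  exact_mod_cast h

lemma count_row {n : ℕ} (x : Fin n → X) (y : Fin n → Y) (a : X) :
    ∑ b : Y, (Finset.univ.filter fun i => x i = a ∧ y i = b).card
      = (Finset.univ.filter fun i => x i = a).card := by
  rw [Finset.card_eq_sum_card_fiberwise (f := y) (t := Finset.univ)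
    (fun i _ => mem_univ _)]
  apply Finset.sum_congr rfl
  intro b _
  rw [Finset.filter_filter]

lemma count_col {n : ℕ} (x : Fin n → X) (y : Fin n → Y) (b : Y) :
    ∑ a : X, (Finset.univ.filter fun i => x i = a ∧ y i = b).card
      = (Finset.univ.filter fun i => y i = b).card := by
  rw [Finset.card_eq_sum_card_fiberwise (f := x) (t := Finset.univ)
    (fun i _ => mem_univ _)]
  apply Finset.sum_congr rfl
  intro a _
  rw [Finset.filter_filter]
  congr 1
  apply Finset.filter_congr
  intro i _
  tauto

lemma count_push {n : ℕ} (f : X → Y → V) (x : Fin n → X) (y : Fin n → Y) (v : V) :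
    (∑ a : X, ∑ b : Y, if f a b = v
        then (Finset.univ.filter fun i => x i = a ∧ y i = b).card else 0)
      = (Finset.univ.filter fun i => f (x i) (y i) = v).card := by
  have hfib : (Finset.univ.filter fun i => f (x i) (y i) = v).card
      = ∑ a : X, ((Finset.univ.filter fun i => f (x i) (y i) = v).filter
          fun i => x i = a).card :=
    Finset.card_eq_sum_card_fiberwise (f := x) (t := Finset.univ) (fun i _ => mem_univ _)
  have hfib2 : ∀ a : X, ((Finset.univ.filter fun i => f (x i) (y i) = v).filter
        fun i => x i = a).card
      = ∑ b : Y, (((Finset.univ.filter fun i => f (x i) (y i) = v).filter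
          fun i => x i = a).filter fun i => y i = b).card :=
    fun a => Finset.card_eq_sum_card_fiberwise (f := y) (t := Finset.univ)
      (fun i _ => mem_univ _)
  rw [hfib]
  apply Finset.sum_congr rfl
  intro a _
  rw [hfib2 a]
  apply Finset.sum_congr rfl
  intro b _
  rw [Finset.filter_filter, Finset.filter_filter]
  by_cases hfv : f a b = v
  · rw [if_pos hfv]
    congr 1
    apply Finset.filter_congr
    intro i _
    have himp : (x i = a ∧ y i = b) → f (x i) (y i) = v := by
      rintro ⟨hx, hy⟩
      rw [hx, hy]
      exact hfv
    tauto
  · rw [if_neg hfv]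
    symm
    rw [Finset.card_eq_zero, Finset.filter_eq_empty_iff]
    rintro i _ ⟨hf, hx, hy⟩
    rw [hx, hy] at hf
    exact hfv hf

end Aux

theorem solvable_determines_type
    {X Y V : Type} [Fintype X] [Fintype Y]
    [DecidableEq X] [DecidableEq Y] [DecidableEq V]
    (S : Set (X × Y)) (f : X → Y → V) (A : Set X) (B : Set Y)
    (hsolv : Solvable S f A B)
    {n : ℕ} (hn : 0 < n) (x : Fin n → X) (y : Fin n → Y)
    (hxA : ∀ i, x i ∈ A) (hyB : ∀ i, y i ∈ B) (hS : ∀ i, (x i, y i) ∈ S)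
    (N₁ N₂ : X → Y → ℕ)
    (hsupp₁ : ∀ a b, N₁ a b ≠ 0 → (a, b) ∈ S ∧ a ∈ A ∧ b ∈ B)
    (hsupp₂ : ∀ a b, N₂ a b ≠ 0 → (a, b) ∈ S ∧ a ∈ A ∧ b ∈ B)
    (hrow₁ : ∀ a : X, ∑ b : Y, N₁ a b = (Finset.univ.filter fun i => x i = a).card)
    (hrow₂ : ∀ a : X, ∑ b : Y, N₂ a b = (Finset.univ.filter fun i => x i = a).card)
    (hcol₁ : ∀ b : Y, ∑ a : X, N₁ a b = (Finset.univ.filter fun i => y i = b).card)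
    (hcol₂ : ∀ b : Y, ∑ a : X, N₂ a b = (Finset.univ.filter fun i => y i = b).card) :
    (∀ v : V, (∑ a : X, ∑ b : Y, if f a b = v then N₁ a b else 0)
        = ∑ a : X, ∑ b : Y, if f a b = v then N₂ a b else 0) ∧
    (∀ v : V, (∑ a : X, ∑ b : Y, if f a b = v then N₁ a b else 0)
        = (Finset.univ.filter fun i => f (x i) (y i) = v).card) := by

  classical
  set N₀ : X → Y → ℕ := fun a b => (Finset.univ.filter fun i => x i = a ∧ y i = b).card
    with hN₀
  have hsupp₀ : ∀ a b, N₀ a b ≠ 0 → (a, b) ∈ S ∧ a ∈ A ∧ b ∈ B := by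
    intro a b h
    simp only [hN₀] at h
    have hne : (Finset.univ.filter fun i => x i = a ∧ y i = b).Nonempty :=
      Finset.card_pos.mp (Nat.pos_of_ne_zero h)
    obtain ⟨i, hi⟩ := hne
    rw [Finset.mem_filter] at hi
    obtain ⟨_, hx, hy⟩ := hi
    refine ⟨?_, ?_, ?_⟩
    · rw [← hx, ← hy]; exact hS i
    · rw [← hx]; exact hxA i
    · rw [← hy]; exact hyB i
  have hrow₀ : ∀ a : X, ∑ b : Y, N₀ a b = (Finset.univ.filter fun i => x i = a).card :=
    fun a => count_row x y a
  have hcol₀ : ∀ b : Y, ∑ a : X, N₀ a b = (Finset.univ.filter fun i => y i = b).card :=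
    fun b => count_col x y b
  have h12 : ∀ v : V, (∑ a : X, ∑ b : Y, if f a b = v then N₁ a b else 0)
      = ∑ a : X, ∑ b : Y, if f a b = v then N₂ a b else 0 :=
    key_nat S f A B hsolv N₁ N₂ hsupp₁ hsupp₂
      (fun a => by rw [hrow₁ a, hrow₂ a]) (fun b => by rw [hcol₁ b, hcol₂ b])
  have h10 : ∀ v : V, (∑ a : X, ∑ b : Y, if f a b = v then N₁ a b else 0)
      = ∑ a : X, ∑ b : Y, if f a b = v then N₀ a b else 0 :=
    key_nat S f A B hsolv N₁ N₀ hsupp₁ hsupp₀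
      (fun a => by rw [hrow₁ a, hrow₀ a]) (fun b => by rw [hcol₁ b, hcol₀ b])
  refine ⟨h12, fun v => ?_⟩
  rw [h10 v]
  exact count_push f x y v

end Stmt8
end

section
/- For any tuple (Q₀,…,Q_{|𝒴|−1}) ∈ 𝒬ₙ^{|𝒴|}, the compatible hyperedge e(Q₀,…,Q_{|𝒴|−1}) is a solvable hyperedge for (S,f); furthermore, there exists a maximal solvable hyperedge ẽ ∈ ℰ(S,f) with e(Q₀,…,Q_{|𝒴|−1}) ⊆ ẽ. -/
/-!
Along a simple loop `(a_i, b_i)`, compatibility of `a_i` with `Q` says that the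
indicator difference `1[f(a_i,b_i)=v] − 1[f(a_i,b_{i+1})=v]` equals
`n Q_{b_i}(v) − n Q_{b_{i+1}}(v)`; summed around the loop this telescopes to zero,
which is exactly `|I₊(v)| = |I₋(v)|`. Since `𝒳` is finite, the solvable hyperedges
containing the compatible one have a maximal element.
-/

open Finset

namespace Stmt9

/-- `a ∈ 𝒳` is compatible with the tuple of types `Q` (given as counts). -/
def Compatible {X Y V : Type} [DecidableEq V] (S : Set (X × Y)) (f : X → Y → V)
    (Q : Y → V → ℕ) (a : X) : Prop :=
  ∀ b₁ b₂ : Y, (a, b₁) ∈ S → (a, b₂) ∈ S → ∀ v : V,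
    (Q b₁ v : ℤ) - (Q b₂ v : ℤ)
      = (if f a b₁ = v then 1 else 0) - (if f a b₂ = v then 1 else 0)

/-- The compatible hyperedge `e(Q₀,…,Q_{|𝒴|−1})`. -/
def compatEdge {X Y V : Type} [DecidableEq V] (S : Set (X × Y)) (f : X → Y → V)
    (Q : Y → V → ℕ) : Set X :=
  {a | Compatible S f Q a}

/-- The balanced condition `|I₊(v)| = |I₋(v)|` for a simple loop. -/
def Balanced {X Y V : Type} (f : X → Y → V) {m : ℕ}
    (a : ZMod m → X) (b : ZMod m → Y) : Prop :=
  ∀ v : V, {i : ZMod m | f (a i) (b i) = v}.ncard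
    = {i : ZMod m | f (a i) (b (i + 1)) = v}.ncard

/-- `A × B` is solvable for `(S, f)`: every simple loop of `A × B` contained in
`S` is balanced. -/
def Solvable {X Y V : Type} (S : Set (X × Y)) (f : X → Y → V)
    (A : Set X) (B : Set Y) : Prop :=
  ∀ (m : ℕ), 2 ≤ m → ∀ (a : ZMod m → X) (b : ZMod m → Y),
    Function.Injective a → Function.Injective b →
    (∀ i, a i ∈ A) → (∀ i, b i ∈ B) →
    (∀ i, (a i, b i) ∈ S) → (∀ i, (a i, b (i + 1)) ∈ S) →
    Balanced f a b

/-- `e ⊆ 𝒳` is a solvable hyperedge if `e × 𝒴` is solvable for `(S,f)`. -/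
def SolvableEdge {X Y V : Type} (S : Set (X × Y)) (f : X → Y → V)
    (e : Set X) : Prop :=
  Solvable S f e Set.univ

theorem ZMod.sum_sub_add_one_eq_zero {m : ℕ} [NeZero m] {M : Type*} [AddCommGroup M]
    (g : ZMod m → M) : ∑ i, (g i - g (i + 1)) = 0 := by
  rw [Finset.sum_sub_distrib, sub_eq_zero]
  exact (Fintype.sum_equiv (Equiv.addRight 1) _ _ fun _ => rfl).symm

theorem ncard_setOf_eq_sum_ite {ι : Type*} [Fintype ι] (p : ι → Prop) [DecidablePred p] :
    ({i | p i}.ncard : ℤ) = ∑ i, if p i then 1 else 0 := by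
  rw [Set.ncard_eq_toFinset_card', Set.toFinset_ofPred, Finset.natCast_card_filter]

theorem balanced_of_potential {X Y V : Type} [DecidableEq V] {f : X → Y → V}
    {m : ℕ} [NeZero m] {a : ZMod m → X} {b : ZMod m → Y} (φ : Y → V → ℤ)
    (hφ : ∀ i v, φ (b i) v - φ (b (i + 1)) v
      = (if f (a i) (b i) = v then 1 else 0) - (if f (a i) (b (i + 1)) = v then 1 else 0)) :
    Balanced f a b := by
  intro v
  have htelescope := ZMod.sum_sub_add_one_eq_zero (fun i => φ (b i) v)
  simp only [hφ, Finset.sum_sub_distrib, sub_eq_zero] at htelescope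
  exact_mod_cast (ncard_setOf_eq_sum_ite _).trans
    (htelescope.trans (ncard_setOf_eq_sum_ite _).symm)

theorem solvableEdge_compatEdge {X Y V : Type} [DecidableEq V]
    (S : Set (X × Y)) (f : X → Y → V) (Q : Y → V → ℕ) :
    SolvableEdge S f (compatEdge S f Q) := by
  intro m hm a b _ _ ha _ hS hS'
  have : NeZero m := ⟨by omega⟩
  exact balanced_of_potential (fun y v => Q y v) fun i => ha i (b i) (b (i + 1)) (hS i) (hS' i)

theorem compatEdge_solvable_and_subset_maximal_general
    {X Y V : Type} [Fintype X] [DecidableEq V]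
    (S : Set (X × Y)) (f : X → Y → V)
    (Q : Y → V → ℕ) :
    SolvableEdge S f (compatEdge S f Q) ∧
    ∃ e : Set X,
      (SolvableEdge S f e ∧
        ∀ e' : Set X, SolvableEdge S f e' → e ⊆ e' → e' = e) ∧
      compatEdge S f Q ⊆ e := by
  have hsolv := solvableEdge_compatEdge S f Q
  obtain ⟨e, hsub, hmax⟩ := Finite.exists_le_maximal hsolv
  exact ⟨hsolv, e,
    ⟨hmax.prop, fun e' he' hee' => (hmax.le_of_ge he' hee').antisymm hee'⟩, hsub⟩

theorem compatEdge_solvable_and_subset_maximal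
    {X Y V : Type} [Fintype X] [Fintype V] [DecidableEq V]
    (S : Set (X × Y)) (f : X → Y → V)
    {n : ℕ} (Q : Y → V → ℕ) (hQtype : ∀ b, ∑ v : V, Q b v = n) :
    SolvableEdge S f (compatEdge S f Q) ∧
    ∃ e : Set X,
      (SolvableEdge S f e ∧
        ∀ e' : Set X, SolvableEdge S f e' → e ⊆ e' → e' = e) ∧
      compatEdge S f Q ⊆ e :=
  compatEdge_solvable_and_subset_maximal_general S f Q

end Stmt9
end

section
/- Let 0 < β < 1/2 and let (Xⁿ,Wⁿ) be a pair of random vectors on 𝒳ⁿ × 𝒳ⁿ satisfying Pr((1/n)·d_H(Xⁿ,Wⁿ) ≥ β) ≤ ε. Then, for every positive integer K, there exist an encoder κₙ : 𝒳ⁿ → 𝒦ₙ with |𝒦ₙ| ≤ K and a decoder τₙ : 𝒦ₙ × 𝒳ⁿ → 𝒳ⁿ such that Pr(τₙ(κₙ(Xⁿ), Wⁿ) ≠ Xⁿ) ≤ ε + νₙ(β)/K, where νₙ(β) := Σ_{i=0}^{⌈nβ⌉−1} (|𝒳|−1)ⁱ·C(n,i) is the size of the Hamming ball of radius ⌈nβ⌉−1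 in 𝒳ⁿ. -/
/-!
Random binning. The candidate list `L(w) = {x | d_H(x, w) / n < β}` lies in the Hamming ball of
radius `⌈nβ⌉ − 1` around `w`, and `Xⁿ ∉ L(Wⁿ)` has probability at most `ε`. The encoder sends the
bin `κ(x) ∈ Fin K`, and the decoder returns any element of `L(w)` in that bin. For `x ∈ L(w)` it
can only fail if another element of `L(w)` lands in the bin of `x`; averaged over all
`κ : 𝒳ⁿ → Fin K`, each of them does so with probability `1/K`. So the average error is at most
`ε + νₙ(β)/K`, and some `κ` is no worse than the average.
-/

open Finset

namespace Stmt10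

/-- The size `νₙ(β)` of the Hamming ball of radius `⌈nβ⌉ − 1` in 𝒳ⁿ. -/
noncomputable def hammingBallSize (X : Type) [Fintype X] (n : ℕ) (β : ℝ) : ℕ :=
  ∑ i ∈ Finset.range ⌈(n : ℝ) * β⌉₊, (Fintype.card X - 1) ^ i * n.choose i

section HammingBall

variable {ι X : Type*} [Fintype ι] [DecidableEq ι] [Fintype X] [DecidableEq X]

def hammingBox (w : ι → X) (s : Finset ι) (j : ι) : Finset X :=
  if j ∈ s then univ.erase (w j) else {w j}

theorem mem_piFinset_hammingBox (x w : ι → X) :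
    x ∈ Fintype.piFinset (hammingBox w {j | x j ≠ w j}) := by
  rw [Fintype.mem_piFinset]
  intro j
  by_cases h : x j = w j <;> simp [hammingBox, h]

theorem card_piFinset_hammingBox (w : ι → X) (s : Finset ι) :
    #(Fintype.piFinset (hammingBox w s)) = (Fintype.card X - 1) ^ #s := by
  simp [hammingBox, apply_ite card]

theorem card_filter_hammingDist_eq_le (w : ι → X) (i : ℕ) :
    #{x | hammingDist x w = i} ≤ (Fintype.card X - 1) ^ i * (Fintype.card ι).choose i := by
  have hsub : ({x | hammingDist x w = i} : Finset (ι → X)) ⊆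
      (powersetCard i univ).biUnion fun s => Fintype.piFinset (hammingBox w s) := by
    intro x hx
    rw [mem_filter, hammingDist] at hx
    exact mem_biUnion.2 ⟨_, mem_powersetCard.2 ⟨subset_univ _, hx.2⟩, mem_piFinset_hammingBox x w⟩
  calc #{x | hammingDist x w = i}
      ≤ ∑ s ∈ powersetCard i univ, #(Fintype.piFinset (hammingBox w s)) :=
        (card_le_card hsub).trans card_biUnion_le
    _ = _ := by
      rw [sum_congr rfl fun s hs => by rw [card_piFinset_hammingBox, (mem_powersetCard.1 hs).2]]
      simp [mul_comm]

theorem card_filter_hammingDist_lt_le (w : ι → X) (r : ℕ) :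
    #{x | hammingDist x w < r} ≤
      ∑ i ∈ range r, (Fintype.card X - 1) ^ i * (Fintype.card ι).choose i := by
  rw [card_eq_sum_card_fiberwise (f := (hammingDist · w)) (t := range r)
    fun x hx => by simpa using hx]
  refine sum_le_sum fun i _ => (card_le_card fun x => ?_).trans (card_filter_hammingDist_eq_le w i)
  simp +contextual

end HammingBall

theorem card_filter_apply_eq_apply_mul_card {V α : Type*} [Fintype V] [DecidableEq V]
    [Fintype α] [DecidableEq α] {x x' : V} (h : x' ≠ x) :
    #{κ : V → α | κ x' = κ x} * Fintype.card α = Fintype.card (V → α) := by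
  rw [← Fintype.card_subtype, ← Fintype.card_prod]
  exact Fintype.card_congr
    { toFun := fun κa => Function.update κa.1.1 x' κa.2
      invFun := fun κ => (⟨Function.update κ x' (κ x), by simp [h.symm]⟩, κ x')
      left_inv := fun ⟨⟨κ, hκ⟩, a⟩ => by simp [h.symm, ← hκ]
      right_inv := fun κ => by simp }

section Binning

variable {V W : Type*} [Nonempty V] {L : W → Finset V} {K : ℕ}

noncomputable def listDecoder (L : W → Finset V) (κ : V → Fin K) (k : Fin K) (w : W) : V :=
  if h : ∃ x ∈ L w, κ x = k then h.choose else Classical.arbitrary V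

theorem listDecoder_apply_eq {κ : V → Fin K} {x : V} {w : W} (hx : x ∈ L w)
    (hu : ∀ y ∈ L w, κ y = κ x → y = x) : listDecoder L κ (κ x) w = x := by
  have h : ∃ y ∈ L w, κ y = κ x := ⟨x, hx, rfl⟩
  rw [listDecoder, dif_pos h]
  exact hu _ h.choose_spec.1 h.choose_spec.2

variable [Fintype V] [DecidableEq V]

theorem card_filter_listDecoder_ne_mul_le {x : V} {w : W} (hx : x ∈ L w) :
    #{κ : V → Fin K | listDecoder L κ (κ x) w ≠ x} * K ≤
      #((L w).erase x) * K ^ Fintype.card V := by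
  have hsub : ({κ | listDecoder L κ (κ x) w ≠ x} : Finset (V → Fin K)) ⊆
      ((L w).erase x).biUnion fun y => {κ | κ y = κ x} := by
    intro κ hκ
    rw [mem_filter] at hκ
    by_contra hno
    refine hκ.2 (listDecoder_apply_eq hx fun y hy hyx => ?_)
    by_contra hne
    exact hno (mem_biUnion.2 ⟨y, mem_erase.2 ⟨hne, hy⟩, by simpa using hyx⟩)
  calc #{κ : V → Fin K | listDecoder L κ (κ x) w ≠ x} * K
      ≤ (∑ y ∈ (L w).erase x, #{κ : V → Fin K | κ y = κ x}) * K := by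
        gcongr
        exact (card_le_card hsub).trans card_biUnion_le
    _ = ∑ y ∈ (L w).erase x, K ^ Fintype.card V := by
        rw [sum_mul]
        refine sum_congr rfl fun y hy => ?_
        simpa using card_filter_apply_eq_apply_mul_card (α := Fin K) (mem_erase.1 hy).1
    _ = #((L w).erase x) * K ^ Fintype.card V := by rw [sum_const, smul_eq_mul]

theorem sum_listDecoder_error_le {x : V} {w : W} {N : ℕ} (hL : #(L w) ≤ N + 1) (hK : 0 < K)
    {a : ℝ} (ha : 0 ≤ a) :
    ∑ κ : V → Fin K, (if listDecoder L κ (κ x) w = x then 0 else a) ≤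
      K ^ Fintype.card V * ((if x ∈ L w then 0 else a) + N / K * a) := by
  rw [sum_ite, sum_const_zero, zero_add, sum_const, nsmul_eq_mul]
  by_cases hx : x ∈ L w
  · have hfail : (#{κ : V → Fin K | ¬listDecoder L κ (κ x) w = x} : ℝ) * K ≤
        N * K ^ Fintype.card V := by
      have herase : #((L w).erase x) ≤ N := by rw [card_erase_of_mem hx]; omega
      exact_mod_cast (card_filter_listDecoder_ne_mul_le hx).trans (by gcongr)
    rw [if_pos hx, zero_add, ← mul_assoc, mul_div_assoc']
    gcongr
    rw [le_div_iff₀ (by exact_mod_cast hK), mul_comm _ (N : ℝ)]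
    exact hfail
  · have hfail : #{κ : V → Fin K | ¬listDecoder L κ (κ x) w = x} ≤ K ^ Fintype.card V := by
      simpa using card_filter_le (univ : Finset (V → Fin K)) _
    rw [if_neg hx]
    calc _ ≤ (K : ℝ) ^ Fintype.card V * a := by gcongr; exact_mod_cast hfail
      _ ≤ _ := by gcongr; exact le_add_of_nonneg_right (by positivity)

theorem exists_binning_code_error_le [Fintype W] {p : V → W → ℝ} (hp : ∀ x w, 0 ≤ p x w)
    {N : ℕ} (hL : ∀ w, #(L w) ≤ N + 1) (hK : 0 < K) :
    ∃ (κ : V → Fin K) (τ : Fin K → W → V),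
      ∑ x, ∑ w, (if τ (κ x) w = x then 0 else p x w) ≤
        ∑ x, ∑ w, (if x ∈ L w then 0 else p x w) + N / K * ∑ x, ∑ w, p x w := by
  have : Nonempty (V → Fin K) := ⟨fun _ => ⟨0, hK⟩⟩
  set B := ∑ x, ∑ w, (if x ∈ L w then 0 else p x w) + N / K * ∑ x, ∑ w, p x w
  have hsum : ∑ κ : V → Fin K, ∑ x, ∑ w, (if listDecoder L κ (κ x) w = x then 0 else p x w) ≤
      ∑ _κ : V → Fin K, B := by
    rw [sum_comm, sum_const, card_univ, Fintype.card_fun, Fintype.card_fin, nsmul_eq_mul]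
    calc ∑ x, ∑ κ : V → Fin K, ∑ w, (if listDecoder L κ (κ x) w = x then 0 else p x w)
        = ∑ x, ∑ w, ∑ κ : V → Fin K, (if listDecoder L κ (κ x) w = x then 0 else p x w) :=
          sum_congr rfl fun _ _ => sum_comm
      _ ≤ ∑ x, ∑ w, (K : ℝ) ^ Fintype.card V *
            ((if x ∈ L w then 0 else p x w) + N / K * p x w) := by
          gcongr with x _ w _
          exact sum_listDecoder_error_le (hL w) hK (hp x w)
      _ = _ := by push_cast [B, ← mul_sum, sum_add_distrib]; rfl
  obtain ⟨κ, -, hκ⟩ := exists_le_of_sum_le univ_nonempty hsum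
  exact ⟨κ, listDecoder L κ, hκ⟩

end Binning

theorem card_filter_hammingDist_div_lt_le {X : Type} [Fintype X] [DecidableEq X] {n : ℕ}
    (β : ℝ) (w : Fin n → X) :
    #{x | (hammingDist x w : ℝ) / n < β} ≤ hammingBallSize X n β + 1 := by
  obtain rfl | hn := n.eq_zero_or_pos
  -- for `n = 0` the quotient is the junk value `0`; only `#(Fin 0 → X) = 1` bounds the set
  · exact (card_le_univ _).trans (by simp)
  have hball : #{x | hammingDist x w < ⌈(n : ℝ) * β⌉₊} ≤ hammingBallSize X n β := by
    simpa [hammingBallSize] using card_filter_hammingDist_lt_le w ⌈(n : ℝ) * β⌉₊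
  refine (card_le_card fun x hx => ?_).trans (hball.trans (Nat.le_succ _))
  rw [mem_filter, div_lt_iff₀ (by exact_mod_cast hn)] at hx
  simpa [Nat.lt_ceil, mul_comm] using hx.2

theorem boosting_general
    {X : Type} [Fintype X] [DecidableEq X]
    {n : ℕ} (β ε : ℝ)
    (p : (Fin n → X) → (Fin n → X) → ℝ)
    (hp0 : ∀ x w, 0 ≤ p x w)
    (hp1 : ∑ x : (Fin n → X), ∑ w : (Fin n → X), p x w = 1)
    (hε : (∑ x : (Fin n → X), ∑ w : (Fin n → X),
        if β ≤ (hammingDist x w : ℝ) / n then p x w else 0) ≤ ε) :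
    ∀ K : ℕ, 0 < K →
      ∃ (κ : (Fin n → X) → Fin K) (τ : Fin K → (Fin n → X) → (Fin n → X)),
        (∑ x : (Fin n → X), ∑ w : (Fin n → X),
            if τ (κ x) w = x then 0 else p x w)
          ≤ ε + (hammingBallSize X n β : ℝ) / K := by
  intro K hK
  have : Nonempty (Fin n → X) := by
    by_contra h
    rw [not_nonempty_iff] at h
    simp at hp1
  obtain ⟨κ, τ, hκ⟩ := exists_binning_code_error_le hp0
    (L := fun w => {x | (hammingDist x w : ℝ) / n < β})
    (card_filter_hammingDist_div_lt_le β) hK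
  refine ⟨κ, τ, hκ.trans ?_⟩
  rw [hp1, mul_one]
  gcongr
  refine le_of_eq_of_le (sum_congr rfl fun x _ => sum_congr rfl fun w _ => ?_) hε
  simp [← not_le, ite_not]

theorem boosting
    {X : Type} [Fintype X] [DecidableEq X]
    {n : ℕ} (β ε : ℝ) (hβ0 : 0 < β) (hβ1 : β < 1 / 2)
    (p : (Fin n → X) → (Fin n → X) → ℝ)
    (hp0 : ∀ x w, 0 ≤ p x w)
    (hp1 : ∑ x : (Fin n → X), ∑ w : (Fin n → X), p x w = 1)
    (hε : (∑ x : (Fin n → X), ∑ w : (Fin n → X),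
        if β ≤ (hammingDist x w : ℝ) / n then p x w else 0) ≤ ε) :
    ∀ K : ℕ, 0 < K →
      ∃ (κ : (Fin n → X) → Fin K) (τ : Fin K → (Fin n → X) → (Fin n → X)),
        (∑ x : (Fin n → X), ∑ w : (Fin n → X),
            if τ (κ x) w = x then 0 else p x w)
          ≤ ε + (hammingBallSize X n β : ℝ) / K :=
  boosting_general β ε p hp0 hp1 hε

end Stmt10
end

section
/- Let (Xⁿ,Yⁿ) be a pair of random vectors on 𝒳ⁿ × 𝒴ⁿ, gₙ : 𝒳ⁿ → 𝒵ₙ a function, and set Zₙ = gₙ(Xⁿ). If a code (φₙ,ψₙ) with message set ℳₙ satisfies Pr(ψₙ(φₙ(Xⁿ),Yⁿ) ≠ gₙ(Xⁿ)) ≤ ε, then for every δ > 0, Pr( (1/n)·log₂(1/P_{Zₙ|Yⁿ}(Zₙ|Yⁿ)) > (1/n)·log₂|ℳₙ| + δ ) ≤ ε + 2^{−nδ}. -/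
/-!
STATEMENT 11: Converse lemma for a function of X.  If a code `(φₙ,ψₙ)` computes
`gₙ(Xⁿ)` from `(φₙ(Xⁿ), Yⁿ)` with error probability at most `ε`, then
`Pr( (1/n) log₂(1/P_{Zₙ|Yⁿ}(Zₙ|Yⁿ)) > (1/n) log₂|ℳₙ| + δ ) ≤ ε + 2^{−nδ}`,
where `Zₙ = gₙ(Xⁿ)`.
-/

open Finset

attribute [local instance] Classical.propDecidable

namespace Stmt11

/-- The conditional probability `P_{Zₙ|Yⁿ}(z|y)` of `Zₙ = gₙ(Xⁿ)` given `Yⁿ = y`. -/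
noncomputable def condProb {X Y Z : Type} [Fintype X] {n : ℕ}
    (p : (Fin n → X) → (Fin n → Y) → ℝ) (g : (Fin n → X) → Z)
    (z : Z) (y : Fin n → Y) : ℝ :=
  (∑ x ∈ Finset.univ.filter (fun x : Fin n → X => g x = z), p x y)
    / (∑ x : Fin n → X, p x y)

theorem converse_function_of_X
    {X Y Z : Type} [Fintype X] [Fintype Y]
    {n M : ℕ} (hM : 0 < M)
    (p : (Fin n → X) → (Fin n → Y) → ℝ)
    (hp0 : ∀ x y, 0 ≤ p x y)
    (hp1 : ∑ x : (Fin n → X), ∑ y : (Fin n → Y), p x y = 1)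
    (g : (Fin n → X) → Z)
    (φ : (Fin n → X) → Fin M) (ψ : Fin M → (Fin n → Y) → Z)
    (ε : ℝ)
    (herr : (∑ x : (Fin n → X), ∑ y : (Fin n → Y),
        if ψ (φ x) y = g x then 0 else p x y) ≤ ε)
    (δ : ℝ) (hδ : 0 < δ) :
    (∑ x : (Fin n → X), ∑ y : (Fin n → Y),
        if Real.logb 2 (M : ℝ) / n + δ
            < Real.logb 2 (1 / condProb p g (g x) y) / n
          then p x y else 0)
      ≤ ε + 2 ^ (-(n : ℝ) * δ) := by
  classical
  have hM0 : (0:ℝ) < M := by exact_mod_cast hM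
  set t : ℝ := 2 ^ (-(n : ℝ) * δ) / M with ht
  have ht0 : 0 < t := by
    apply div_pos _ hM0
    exact Real.rpow_pos_of_pos two_pos _
  have hq0 : ∀ y : Fin n → Y, (0:ℝ) ≤ ∑ x : Fin n → X, p x y :=
    fun y => Finset.sum_nonneg fun x _ => hp0 x y
  have hcp0 : ∀ (z : Z) (y : Fin n → Y), 0 ≤ condProb p g z y := by
    intro z y
    exact div_nonneg (Finset.sum_nonneg fun x _ => hp0 x y) (hq0 y)
  have hnum : ∀ (z : Z) (y : Fin n → Y),
      (∑ x ∈ Finset.univ.filter (fun x : Fin n → X => g x = z), p x y)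
      = condProb p g z y * (∑ x : Fin n → X, p x y) := by
    intro z y
    rcases eq_or_lt_of_le (hq0 y) with h | h
    · have hall : ∀ x : Fin n → X, p x y = 0 := by
        intro x
        have h0 := (Finset.sum_eq_zero_iff_of_nonneg
          (fun x (_ : x ∈ (Finset.univ : Finset (Fin n → X))) => hp0 x y)).mp h.symm
        exact h0 x (Finset.mem_univ x)
      simp [condProb, hall]
    · unfold condProb
      rw [div_mul_cancel₀]
      exact ne_of_gt h
  -- key: the event implies condProb < t
  have hkey : ∀ (x : Fin n → X) (y : Fin n → Y),
      (Real.logb 2 (M:ℝ) / n + δ < Real.logb 2 (1 / condProb p g (g x) y) / n) →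
      condProb p g (g x) y < t := by
    intro x y h
    set P := condProb p g (g x) y with hP
    have hP0 := hcp0 (g x) y
    have hn : n ≠ 0 := by
      rintro rfl
      simp only [Nat.cast_zero, div_zero, zero_add] at h
      linarith
    have hn0 : (0:ℝ) < n := by
      exact_mod_cast Nat.pos_of_ne_zero hn
    have h2 : Real.logb 2 (M:ℝ) + (n:ℝ) * δ < Real.logb 2 (1/P) := by
      have hmul := mul_lt_mul_of_pos_right h hn0
      rw [add_mul, div_mul_cancel₀ _ (ne_of_gt hn0), div_mul_cancel₀ _ (ne_of_gt hn0)] at hmul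
      linarith
    have hlogM : 0 ≤ Real.logb 2 (M:ℝ) :=
      Real.logb_nonneg one_lt_two (by exact_mod_cast hM)
    have hPpos : 0 < P := by
      rcases eq_or_lt_of_le hP0 with h0 | h0
      · exfalso
        have hP00 : P = 0 := by rw [hP, ← h0]
        rw [hP00] at h2
        simp only [div_zero, Real.logb_zero] at h2
        nlinarith
      · exact h0
    rw [one_div, Real.logb_inv] at h2
    have h3 : Real.logb 2 P < -(n:ℝ)*δ - Real.logb 2 (M:ℝ) := by linarith
    calc P = 2 ^ Real.logb 2 P := (Real.rpow_logb two_pos (by norm_num) hPpos).symm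
      _ < 2 ^ (-(n:ℝ)*δ - Real.logb 2 (M:ℝ)) :=
          (Real.rpow_lt_rpow_left_iff (by norm_num : (1:ℝ) < 2)).mpr h3
      _ = t := by
          rw [Real.rpow_sub two_pos, Real.rpow_logb two_pos (by norm_num) hM0]
  -- pointwise split into error part and correct-but-atypical part
  have hsplit : ∀ (x : Fin n → X) (y : Fin n → Y),
      (if Real.logb 2 (M:ℝ)/n + δ < Real.logb 2 (1/condProb p g (g x) y)/n
        then p x y else 0)
      ≤ (if ψ (φ x) y = g x then 0 else p x y)
        + (if ψ (φ x) y = g x ∧ condProb p g (g x) y < t then p x y else 0) := by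
    intro x y
    by_cases hE : Real.logb 2 (M:ℝ)/n + δ < Real.logb 2 (1/condProb p g (g x) y)/n
    · rw [if_pos hE]
      have hc := hkey x y hE
      by_cases hcor : ψ (φ x) y = g x
      · rw [if_pos hcor, if_pos ⟨hcor, hc⟩]; linarith
      · rw [if_neg hcor, if_neg (by tauto)]; linarith
    · rw [if_neg hE]
      have h1 : (0:ℝ) ≤ if ψ (φ x) y = g x then 0 else p x y := by
        split
        · exact le_refl 0
        · exact hp0 x y
      have h2 : (0:ℝ) ≤ if ψ (φ x) y = g x ∧ condProb p g (g x) y < t then p x y else 0 := by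
        split
        · exact hp0 x y
        · exact le_refl 0
      linarith
  -- bound on the correct-but-atypical part
  have hsecond : (∑ x : Fin n → X, ∑ y : Fin n → Y,
      if ψ (φ x) y = g x ∧ condProb p g (g x) y < t then p x y else 0)
      ≤ (2:ℝ) ^ (-(n:ℝ)*δ) := by
    rw [Finset.sum_comm]
    have hy : ∀ y : Fin n → Y,
        (∑ x : Fin n → X,
          if ψ (φ x) y = g x ∧ condProb p g (g x) y < t then p x y else 0)
        ≤ (M:ℝ) * t * (∑ x : Fin n → X, p x y) := by
      intro y
      have hfib := Finset.sum_fiberwise (Finset.univ : Finset (Fin n → X)) φ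
        (fun x => if ψ (φ x) y = g x ∧ condProb p g (g x) y < t then p x y else 0)
      rw [← hfib]
      have hm : ∀ m : Fin M,
          (∑ x ∈ Finset.univ.filter (fun x : Fin n → X => φ x = m),
            if ψ (φ x) y = g x ∧ condProb p g (g x) y < t then p x y else 0)
          ≤ t * (∑ x : Fin n → X, p x y) := by
        intro m
        calc (∑ x ∈ Finset.univ.filter (fun x : Fin n → X => φ x = m),
              if ψ (φ x) y = g x ∧ condProb p g (g x) y < t then p x y else 0)
            ≤ ∑ x ∈ Finset.univ.filter (fun x : Fin n → X => φ x = m),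
              (if g x = ψ m y ∧ condProb p g (ψ m y) y < t then p x y else 0) := by
              apply Finset.sum_le_sum
              intro x hx
              have hφ : φ x = m := (Finset.mem_filter.mp hx).2
              by_cases hc : ψ (φ x) y = g x ∧ condProb p g (g x) y < t
              · rw [if_pos hc, if_pos]
                refine ⟨?_, ?_⟩
                · rw [← hφ]; exact hc.1.symm
                · rw [← hφ, hc.1]; exact hc.2
              · rw [if_neg hc]
                split
                · exact hp0 x y
                · exact le_refl 0
          _ ≤ ∑ x : Fin n → X,
              (if g x = ψ m y ∧ condProb p g (ψ m y) y < t then p x y else 0) := by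
              apply Finset.sum_le_sum_of_subset_of_nonneg (Finset.filter_subset _ _)
              intro x _ _
              split
              · exact hp0 x y
              · exact le_refl 0
          _ ≤ t * (∑ x : Fin n → X, p x y) := by
              by_cases hc : condProb p g (ψ m y) y < t
              · have : (∑ x : Fin n → X,
                    (if g x = ψ m y ∧ condProb p g (ψ m y) y < t then p x y else 0))
                    = ∑ x ∈ Finset.univ.filter (fun x : Fin n → X => g x = ψ m y), p x y := by
                  rw [Finset.sum_filter]
                  apply Finset.sum_congr rfl
                  intro x _
                  simp [hc]
                rw [this, hnum]
                exact mul_le_mul_of_nonneg_right (le_of_lt hc) (hq0 y)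
              · have : (∑ x : Fin n → X,
                    (if g x = ψ m y ∧ condProb p g (ψ m y) y < t then p x y else 0)) = 0 := by
                  apply Finset.sum_eq_zero
                  intro x _
                  rw [if_neg (by tauto)]
                rw [this]
                exact mul_nonneg (le_of_lt ht0) (hq0 y)
      calc (∑ m : Fin M, ∑ x ∈ Finset.univ.filter (fun x : Fin n → X => φ x = m),
            if ψ (φ x) y = g x ∧ condProb p g (g x) y < t then p x y else 0)
          ≤ ∑ _m : Fin M, t * (∑ x : Fin n → X, p x y) :=
            Finset.sum_le_sum fun m _ => hm m
        _ = (M:ℝ) * t * (∑ x : Fin n → X, p x y) := by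
            rw [Finset.sum_const, Finset.card_univ, Fintype.card_fin, nsmul_eq_mul]
            ring
    calc (∑ y : Fin n → Y, ∑ x : Fin n → X,
          if ψ (φ x) y = g x ∧ condProb p g (g x) y < t then p x y else 0)
        ≤ ∑ y : Fin n → Y, (M:ℝ) * t * (∑ x : Fin n → X, p x y) :=
          Finset.sum_le_sum fun y _ => hy y
      _ = (M:ℝ) * t * (∑ y : Fin n → Y, ∑ x : Fin n → X, p x y) := by
          rw [← Finset.mul_sum]
      _ = (M:ℝ) * t := by
          rw [Finset.sum_comm, hp1, mul_one]
      _ = (2:ℝ) ^ (-(n:ℝ)*δ) := by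
          rw [ht]; field_simp
  calc (∑ x : Fin n → X, ∑ y : Fin n → Y,
        if Real.logb 2 (M:ℝ)/n + δ < Real.logb 2 (1/condProb p g (g x) y)/n
          then p x y else 0)
      ≤ ∑ x : Fin n → X, ∑ y : Fin n → Y,
          ((if ψ (φ x) y = g x then 0 else p x y)
          + (if ψ (φ x) y = g x ∧ condProb p g (g x) y < t then p x y else 0)) := by
        apply Finset.sum_le_sum
        intro x _
        exact Finset.sum_le_sum fun y _ => hsplit x y
    _ = (∑ x : Fin n → X, ∑ y : Fin n → Y, if ψ (φ x) y = g x then 0 else p x y)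
        + (∑ x : Fin n → X, ∑ y : Fin n → Y,
            if ψ (φ x) y = g x ∧ condProb p g (g x) y < t then p x y else 0) := by
        rw [← Finset.sum_add_distrib]
        apply Finset.sum_congr rfl
        intro x _
        rw [← Finset.sum_add_distrib]
    _ ≤ ε + (2:ℝ) ^ (-(n:ℝ)*δ) := add_le_add herr hsecond

end Stmt11
end

section
/- Let 0 < q < 1 and let (Xⁿ,Yⁿ) be a pair of random vectors on 𝒳ⁿ × 𝒴ⁿ such that P_{XⁿYⁿ}(x,ŷ) ≥ q·P_{XⁿYⁿ}(x,y) for all x ∈ 𝒳ⁿ and all y,ŷ ∈ 𝒴ⁿ with Hamming distance d_H(y,ŷ) ≤ 1. Let fₙ : 𝒳ⁿ × 𝒴ⁿ → 𝒵ₙ and let (φₙ,ψₙ) be a code with Pr(ψₙ(φₙ(Xⁿ),Yⁿ) ≠ fₙ(Xⁿ,Yⁿ)) ≤ ε. Then for every i ∈ {1,…,n}, the probability that the full list of perturbed outputs is not correctly reproduced is small: Pr( ∃ b ∈ 𝒴 such that ψₙ(φₙ(Xⁿ), b(Yⁿ)^(−i)) ≠ fₙ(Xⁿ, b(Yⁿ)^(−i))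 ) ≤ |𝒴|·ε/q. -/
/-!
STATEMENT 13: For a smooth pair `(Xⁿ,Yⁿ)` (constant `q`) and a code `(φₙ,ψₙ)`
with error probability at most `ε`, the probability that the list of perturbed
outputs `(ψₙ(φₙ(Xⁿ), b(Yⁿ)^(−i)) : b ∈ 𝒴)` is not entirely correct is at most
`|𝒴| ε / q`.
-/

open Finset

namespace Stmt13

lemma sum_update_aux {Y : Type} [Fintype Y] [DecidableEq Y] {n : ℕ}
    (g : (Fin n → Y) → ℝ) (i : Fin n) :
    ∑ b : Y, ∑ y : (Fin n → Y), g (Function.update y i b)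
      = (Fintype.card Y : ℝ) * ∑ y, g y := by
  have hinv : Function.Involutive
      (fun p : Y × (Fin n → Y) => (p.2 i, Function.update p.2 i p.1)) := by
    intro p
    simp [Function.update_idem]
  calc ∑ b : Y, ∑ y : (Fin n → Y), g (Function.update y i b)
      = ∑ p : Y × (Fin n → Y), g (Function.update p.2 i p.1) := by
        rw [Fintype.sum_prod_type]
    _ = ∑ p : Y × (Fin n → Y), g p.2 :=
        Fintype.sum_bijective _ hinv.bijective _ _ (fun p => rfl)
    _ = (Fintype.card Y : ℝ) * ∑ y, g y := by
        simp [Fintype.sum_prod_type, Finset.card_univ, mul_comm]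

theorem perturbed_list_error_bound
    {X Y Z : Type} [Fintype X] [Fintype Y] [DecidableEq Y] [DecidableEq Z]
    {n M : ℕ} (q ε : ℝ) (hq0 : 0 < q) (hq1 : q < 1)
    (p : (Fin n → X) → (Fin n → Y) → ℝ)
    (hp0 : ∀ x y, 0 ≤ p x y)
    (hp1 : ∑ x : (Fin n → X), ∑ y : (Fin n → Y), p x y = 1)
    (hsmooth : ∀ (x : Fin n → X) (y y' : Fin n → Y),
      hammingDist y y' ≤ 1 → q * p x y ≤ p x y')
    (f : (Fin n → X) → (Fin n → Y) → Z)
    (φ : (Fin n → X) → Fin M) (ψ : Fin M → (Fin n → Y) → Z)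
    (herr : (∑ x : (Fin n → X), ∑ y : (Fin n → Y),
        if ψ (φ x) y = f x y then 0 else p x y) ≤ ε)
    (i : Fin n) :
    (∑ x : (Fin n → X), ∑ y : (Fin n → Y),
        if ∀ b : Y, ψ (φ x) (Function.update y i b) = f x (Function.update y i b)
          then 0 else p x y)
      ≤ (Fintype.card Y : ℝ) * ε / q := by
  classical
  set E : (Fin n → X) → (Fin n → Y) → ℝ :=
    fun x y => if ψ (φ x) y = f x y then 0 else p x y with hE
  have hE0 : ∀ x y, 0 ≤ E x y := by
    intro x y; simp only [hE]; split
    · exact le_refl 0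
    · exact hp0 x y
  have hdist : ∀ (y : Fin n → Y) (b : Y),
      hammingDist y (Function.update y i b) ≤ 1 := by
    intro y b
    have hsub : ({j | y j ≠ Function.update y i b j} : Finset (Fin n)) ⊆ {i} := by
      intro j hj
      simp only [Finset.mem_filter, Finset.mem_univ, true_and] at hj
      by_contra h
      simp only [Finset.mem_singleton] at h
      exact hj (by rw [Function.update_of_ne (fun hji => h hji)])
    calc hammingDist y (Function.update y i b)
        ≤ ({i} : Finset (Fin n)).card := Finset.card_le_card hsub
      _ = 1 := Finset.card_singleton i
  have hpoint : ∀ x y,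
      (if ∀ b : Y, ψ (φ x) (Function.update y i b) = f x (Function.update y i b)
        then 0 else p x y)
      ≤ (1/q) * ∑ b : Y, E x (Function.update y i b) := by
    intro x y
    split
    · exact mul_nonneg (by positivity) (Finset.sum_nonneg fun b _ => hE0 x _)
    · next h =>
      push_neg at h
      obtain ⟨b, hb⟩ := h
      have h1 : q * p x y ≤ E x (Function.update y i b) := by
        simpa [hE, hb] using hsmooth x y (Function.update y i b) (hdist y b)
      have h2 : E x (Function.update y i b) ≤ ∑ b : Y, E x (Function.update y i b) :=
        Finset.single_le_sum (fun c _ => hE0 x _) (Finset.mem_univ b)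
      have h3 := mul_le_mul_of_nonneg_left (h1.trans h2)
        (le_of_lt (one_div_pos.mpr hq0))
      calc p x y = (1/q) * (q * p x y) := by field_simp
        _ ≤ (1/q) * ∑ b : Y, E x (Function.update y i b) := h3
  calc (∑ x : (Fin n → X), ∑ y : (Fin n → Y),
        if ∀ b : Y, ψ (φ x) (Function.update y i b) = f x (Function.update y i b)
          then 0 else p x y)
      ≤ ∑ x : (Fin n → X), ∑ y : (Fin n → Y),
          (1/q) * ∑ b : Y, E x (Function.update y i b) := by
        refine Finset.sum_le_sum fun x _ => Finset.sum_le_sum fun y _ => hpoint x y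
    _ = (1/q) * ∑ x : (Fin n → X), ∑ b : Y, ∑ y : (Fin n → Y),
          E x (Function.update y i b) := by
        rw [Finset.mul_sum]
        refine Finset.sum_congr rfl fun x _ => ?_
        rw [← Finset.mul_sum, Finset.sum_comm]
    _ = (1/q) * ∑ x : (Fin n → X), (Fintype.card Y : ℝ) * ∑ y, E x y := by
        refine congrArg _ (Finset.sum_congr rfl fun x _ => ?_)
        exact sum_update_aux (E x) i
    _ = (Fintype.card Y : ℝ) * (∑ x, ∑ y, E x y) / q := by
        rw [← Finset.mul_sum]; ring
    _ ≤ (Fintype.card Y : ℝ) * ε / q := by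
        have h4 : (∑ x, ∑ y, E x y) ≤ ε := herr
        gcongr

end Stmt13
end

section
/- Let 𝒳 = 𝒴 = {0,1} and for n ≥ 1 define fₙ : {0,1}ⁿ × {0,1}ⁿ → {0,1}ⁿ by fₙ(x,y) = ( 1[xᵢ ⊕ yᵢ = x_{i+1} ⊕ y_{i+1}] : 1 ≤ i ≤ n ), where x_{n+1} := x₁, y_{n+1} := y₁ and ⊕ is addition mod 2. Then the discrete partition {{0},{1}} of 𝒳 does not satisfy Condition 1: for any i ∈ {1,…,n}, there is no map ξ : ({0,1}ⁿ)^{2} → {{0},{1}} such that ξ((fₙ(a x^(−i), b y^(−i)) : b ∈ {0,1})) = {a} for all a ∈ {0,1} and all (x,y) ∈ {0,1}ⁿ × {0,1}ⁿ. Indeed, for every a, x, y, writing ā = a ⊕ 1 and x̄ = (x₁⊕1,…,xₙ⊕1), one has fₙ(a x^(−i), b y^(−i)) = fₙ(ā x̄^(−i), b y^(−i)) for all b ∈ {0,1}. -/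
/-!
STATEMENT 15: For `fₙ(x,y) = (1[xᵢ ⊕ yᵢ = x_{i+1} ⊕ y_{i+1}])ᵢ` (cyclic indices)
on bits, the discrete partition `{{0},{1}}` of 𝒳 = {0,1} does not satisfy
Condition 1: no map `ξ` can recover `a` from the list
`(fₙ(a x^(−i), b y^(−i)) : b ∈ {0,1})`; indeed flipping all of `a x^(−i)` leaves
the list unchanged.

Bits are modelled by `ZMod 2` (so ⊕ is `+`), and the discrete partition by the
identity map, so `ξ` takes values in `ZMod 2` and must return `a` itself.
-/

namespace Stmt15

/-- `fₙ(x,y) = ( 1[xᵢ ⊕ yᵢ = x_{i+1} ⊕ y_{i+1}] : 1 ≤ i ≤ n )` with cyclic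
index `i + 1` (so `x_{n+1} = x₁`). -/
def F (n : ℕ) [NeZero n] (x y : Fin n → ZMod 2) : Fin n → Bool :=
  fun i => decide (x i + y i = x (i + 1) + y (i + 1))

theorem discrete_partition_not_cond1 (n : ℕ) [NeZero n] (i : Fin n) :
    (¬ ∃ ξ : (ZMod 2 → (Fin n → Bool)) → ZMod 2,
        ∀ (a : ZMod 2) (x y : Fin n → ZMod 2),
          ξ (fun b => F n (Function.update x i a) (Function.update y i b)) = a) ∧
    ∀ (a : ZMod 2) (x y : Fin n → ZMod 2) (b : ZMod 2),
      F n (Function.update x i a) (Function.update y i b)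
        = F n (Function.update (fun j => x j + 1) i (a + 1))
            (Function.update y i b) := by
    have key : ∀ (a : ZMod 2) (x y : Fin n → ZMod 2) (b : ZMod 2),
      F n (Function.update x i a) (Function.update y i b)
        = F n (Function.update (fun j => x j + 1) i (a + 1))
            (Function.update y i b) := by
      intro a x y b
      have hup : Function.update (fun j => x j + 1) i (a + 1)
          = fun j => Function.update x i a j + 1 := by
        funext j
        by_cases h : j = i
        · subst h; simp
        · simp [Function.update_of_ne h]
      rw [hup]
      funext k
      simp only [F]
      congr 1
      apply propext
      constructor <;> intro h
      · rw [add_right_comm, h, add_right_comm]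
      · have := congrArg (· + 1) h
        simp only [add_right_comm _ _ (1:ZMod 2)] at this ⊢
        simpa [add_assoc, CharTwo.add_self_eq_zero] using this
    refine ⟨?_, key⟩
    rintro ⟨ξ, hξ⟩
    have h0 := hξ 0 (fun _ => 0) (fun _ => 0)
    have h1 := hξ 1 (fun j => (0 : ZMod 2) + 1) (fun _ => 0)
    have : (fun b => F n (Function.update (fun _ => (0:ZMod 2)) i 0)
        (Function.update (fun _ => (0:ZMod 2)) i b))
        = fun b => F n (Function.update (fun j => (0:ZMod 2) + 1) i (0 + 1))
        (Function.update (fun _ => (0:ZMod 2)) i b) := by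
      funext b; exact key 0 (fun _ => 0) (fun _ => 0) b
    rw [this] at h0
    simp only [zero_add] at h0 h1
    rw [h0] at h1
    exact one_ne_zero h1.symm

end Stmt15
end

section
/- Let fₙ : 𝒳ⁿ × 𝒴ⁿ → 𝒵ₙ and let X̄₁ and X̄₂ be partitions of 𝒳 that each satisfy Condition 1 (with respect to fₙ). Then their common refinement X̄ := { C₁ ∩ C₂ : C₁ ∈ X̄₁, C₂ ∈ X̄₂, C₁ ∩ C₂ ≠ ∅ } is a partition of 𝒳 that also satisfies Condition 1 with respect to fₙ. -/
/-!
STATEMENT 17: If two partitions X̄₁ and X̄₂ of 𝒳 both satisfy Condition 1 with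
respect to `fₙ`, then so does their common refinement.

Partitions are encoded by maps `π : X → B` (blocks = fibers); the common
refinement of the partitions encoded by `π₁` and `π₂` is encoded by the pairing
`x ↦ (π₁ x, π₂ x)`, whose fibers are exactly the nonempty intersections
`C₁ ∩ C₂` of blocks.
-/

namespace Stmt17

/-- Condition 1 of X̄-informativity (partition encoded by `π : X → B`). -/
def Cond1 {X Y B Z : Type} {n : ℕ} (π : X → B)
    (f : (Fin n → X) → (Fin n → Y) → Z) : Prop :=
  ∀ i : Fin n, ∃ ξ : (Y → Z) → B, ∀ (a : X) (x : Fin n → X) (y : Fin n → Y),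
    ξ (fun b => f (Function.update x i a) (Function.update y i b)) = π a

theorem common_refinement_cond1
    {X Y B₁ B₂ Z : Type} {n : ℕ}
    (f : (Fin n → X) → (Fin n → Y) → Z)
    (π₁ : X → B₁) (π₂ : X → B₂)
    (h₁ : Cond1 π₁ f) (h₂ : Cond1 π₂ f) :
    Cond1 (fun x => (π₁ x, π₂ x)) f := by
  intro i
  obtain ⟨ξ₁, hξ₁⟩ := h₁ i
  obtain ⟨ξ₂, hξ₂⟩ := h₂ i
  exact ⟨fun g => (ξ₁ g, ξ₂ g), fun a x y => by simp [hξ₁ a x y, hξ₂ a x y]⟩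

end Stmt17
end

section
/- Let f : 𝒳 × 𝒴 → 𝒳 × 𝒴 be the identity function f(x,y) = (x,y) and let S ⊆ 𝒳 × 𝒴. Then a set 𝒜 × ℬ ⊆ 𝒳 × 𝒴 is solvable for (S,f) if and only if (𝒜 × ℬ) ∩ S contains no simple loop. -/
/-!
STATEMENT 18: For the identity function `f(x,y) = (x,y)`, a set `𝒜 × ℬ` is
solvable for `(S,f)` if and only if `(𝒜 × ℬ) ∩ S` contains no simple loop.
-/

namespace Stmt18

/-- The balanced condition `|I₊(v)| = |I₋(v)|` for a simple loop. -/
def Balanced {X Y V : Type} (f : X → Y → V) {m : ℕ}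
    (a : ZMod m → X) (b : ZMod m → Y) : Prop :=
  ∀ v : V, {i : ZMod m | f (a i) (b i) = v}.ncard
    = {i : ZMod m | f (a i) (b (i + 1)) = v}.ncard

/-- `A × B` is solvable for `(S, f)`: every simple loop of `A × B` contained in
`S` is balanced.  A simple loop with `m ≥ 2` pairwise distinct rows `a i` and
columns `b i` consists of the pairs `(a i, b i)` and `(a i, b (i+1))`. -/
def Solvable {X Y V : Type} (S : Set (X × Y)) (f : X → Y → V)
    (A : Set X) (B : Set Y) : Prop :=
  ∀ (m : ℕ), 2 ≤ m → ∀ (a : ZMod m → X) (b : ZMod m → Y),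
    Function.Injective a → Function.Injective b →
    (∀ i, a i ∈ A) → (∀ i, b i ∈ B) →
    (∀ i, (a i, b i) ∈ S) → (∀ i, (a i, b (i + 1)) ∈ S) →
    Balanced f a b

theorem identity_solvable_iff_no_simple_loop
    {X Y : Type} (S : Set (X × Y)) (A : Set X) (B : Set Y) :
    Solvable S (fun x y => (x, y)) A B ↔
      ¬ ∃ (m : ℕ) (a : ZMod m → X) (b : ZMod m → Y),
          2 ≤ m ∧ Function.Injective a ∧ Function.Injective b ∧
          (∀ i, a i ∈ A) ∧ (∀ i, b i ∈ B) ∧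
          (∀ i, (a i, b i) ∈ S) ∧ (∀ i, (a i, b (i + 1)) ∈ S) := by
  constructor
  · rintro hsol ⟨m, a, b, hm, ha, hb, hA, hB, hS1, hS2⟩
    haveI : NeZero m := ⟨by omega⟩
    haveI : Fact (1 < m) := ⟨by omega⟩
    have hbal := hsol m hm a b ha hb hA hB hS1 hS2 (a 0, b 0)
    have h1 : {i : ZMod m | (a i, b i) = (a 0, b 0)} = {0} := by
      ext i
      simp only [Set.mem_setOf_eq, Set.mem_singleton_iff, Prod.mk.injEq]
      constructor
      · rintro ⟨h, -⟩; exact ha h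
      · rintro rfl; exact ⟨rfl, rfl⟩
    have h2 : {i : ZMod m | (a i, b (i + 1)) = (a 0, b 0)} = ∅ := by
      ext i
      simp only [Set.mem_setOf_eq, Set.mem_empty_iff_false, iff_false, Prod.mk.injEq]
      rintro ⟨h, h'⟩
      have hi : i = 0 := ha h
      have : i + 1 = 0 := hb h'
      rw [hi, zero_add] at this
      exact one_ne_zero this
    rw [h1, h2] at hbal
    simp at hbal
  · rintro hno m hm a b ha hb hA hB hS1 hS2
    exact absurd ⟨m, a, b, hm, ha, hb, hA, hB, hS1, hS2⟩ hno

end Stmt18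
end

section
/- Let 𝒳 = 𝒴 = {0,1,2}, let ℰ = {{0,1},{1,2},{0,2}}, let 𝒢 = (𝒳,ℰ), and let (X,Y) be jointly distributed with P_{XY}(x,y) = 1/6 for all (x,y) with x ≠ y and P_{XY}(x,x) = 0. Then the conditional hypergraph entropy satisfies H_𝒢(X|Y) = 1/2; moreover the minimum is attained by the test channel P_{W|X}(w|x) = 1/2 for each of the two hyperedges w ∈ ℰ containing x. -/
open Finset

attribute [local instance] Classical.propDecidable

namespace Stmt19

/-- The conditional mutual information `I(W ∧ X | Y)` (base-2), where the joint
distribution of `(W, X, Y)` is `P(w,x,y) = t(w|x) P_{XY}(x,y)` (so that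
`W −∘− X −∘− Y` is a Markov chain with test channel `t`). -/
noncomputable def condMI {X Y : Type} [Fintype X] [Fintype Y]
    (P : X → Y → ℝ) (t : X → Finset X → ℝ) : ℝ :=
  ∑ w : Finset X, ∑ x : X, ∑ y : Y,
    t x w * P x y *
      Real.logb 2 ((t x w * P x y) * (∑ x' : X, P x' y)
        / ((∑ x' : X, t x' w * P x' y) * P x y))

/-- The conditional hypergraph entropy `H_𝒢(X|Y)` with hyperedge set `E`. -/
noncomputable def hypEnt {X Y : Type} [Fintype X] [Fintype Y]
    (P : X → Y → ℝ) (E : Set (Finset X)) : ℝ :=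
  sInf {r | ∃ t : X → Finset X → ℝ,
    (∀ x w, 0 ≤ t x w) ∧ (∀ x, ∑ w : Finset X, t x w = 1) ∧
    (∀ x w, t x w ≠ 0 → w ∈ E ∧ x ∈ w) ∧ r = condMI P t}

/-- The joint distribution: uniform on the pairs `(x,y)` with `x ≠ y`. -/
noncomputable def P19 : Fin 3 → Fin 3 → ℝ :=
  fun x y => if x = y then 0 else 1 / 6

/-- The hyperedge set `ℰ = {{0,1},{1,2},{0,2}}`. -/
def E19 : Set (Finset (Fin 3)) :=
  {({0, 1} : Finset (Fin 3)), ({1, 2} : Finset (Fin 3)), ({0, 2} : Finset (Fin 3))}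

/-- The test channel `P_{W|X}(w|x) = 1/2` for each of the two hyperedges
`w ∈ ℰ` containing `x`. -/
noncomputable def t19 : Fin 3 → Finset (Fin 3) → ℝ :=
  fun x w => if w ∈ E19 ∧ x ∈ w then 1 / 2 else 0

/-!
Fix an admissible test channel `t`. Given `W = w = {a, b}` and `Y`, the input `X` is determined
when `Y ∈ w` and is one of `a, b` when `Y` is the third vertex. Computing the information
term by term, the hyperedge `w` contributes `(m_w + D_w) / 6` to `I(W ∧ X | Y)`, where
`m_w = ∑ₓ t(w|x)` and `D_w` is the (unnormalised) divergence of `t(w|·)` from the uniform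
distribution on `w`. Since `∑_w m_w = 3` and `D_w ≥ 0` by Gibbs' inequality, the information
is at least `1/2`, with equality when every `t(w|·)` is constant on `w`, as for `t19`.
-/

lemma sub_le_mul_log_div {a c : ℝ} (ha : 0 ≤ a) (hc : 0 < c) : a - c ≤ a * Real.log (a / c) :=
  calc a - c = c * (a / c - 1) := by field_simp
    _ ≤ c * (a / c * Real.log (a / c)) := by
      gcongr; exact Real.self_sub_one_le_mul_log (by positivity)
    _ = a * Real.log (a / c) := by field_simp

/-- `∑ᵢ aᵢ log₂ (aᵢ / ā)` over `s`, with `ā` the mean of `a` on `s`. -/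
noncomputable def klDivUniform {ι : Type*} (s : Finset ι) (a : ι → ℝ) : ℝ :=
  ∑ i ∈ s, a i * Real.logb 2 (#s * a i / ∑ j ∈ s, a j)

lemma klDivUniform_nonneg {ι : Type*} {s : Finset ι} {a : ι → ℝ}
    (ha : ∀ i ∈ s, 0 ≤ a i) : 0 ≤ klDivUniform s a := by
  rcases (sum_nonneg ha).eq_or_lt with hsum | hsum
  · have hzero := (sum_eq_zero_iff_of_nonneg ha).mp hsum.symm
    exact (sum_eq_zero fun i hi => by rw [hzero i hi, zero_mul]).ge
  set c := (∑ j ∈ s, a j) / #s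
  have hcard : (0 : ℝ) < #s := mod_cast card_pos.mpr (nonempty_of_sum_ne_zero hsum.ne')
  have hc : 0 < c := div_pos hsum hcard
  have hgibbs : 0 ≤ ∑ i ∈ s, a i * Real.log (a i / c) :=
    calc (0 : ℝ) = ∑ i ∈ s, (a i - c) := by
          rw [sum_sub_distrib, sum_const, nsmul_eq_mul, mul_div_cancel₀ _ hcard.ne', sub_self]
      _ ≤ _ := sum_le_sum fun i hi => sub_le_mul_log_div (ha i hi) hc
  have hrw : klDivUniform s a = (∑ i ∈ s, a i * Real.log (a i / c)) / Real.log 2 := by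
    rw [klDivUniform, sum_div]
    refine sum_congr rfl fun i _ => ?_
    rw [Real.logb, div_div_eq_mul_div, mul_comm (#s : ℝ), mul_div_assoc]
    ring
  rw [hrw]
  exact div_nonneg hgibbs (Real.log_pos one_lt_two).le

lemma klDivUniform_eq_zero_of_forall_eq {ι : Type*} {s : Finset ι} {a : ι → ℝ} {c : ℝ}
    (hc : ∀ i ∈ s, a i = c) : klDivUniform s a = 0 := by
  have hlog : ∀ x : ℝ, Real.logb 2 (x / x) = 0 := fun x => by
    rcases eq_or_ne x 0 with rfl | hx <;> simp [*]
  rw [klDivUniform, sum_congr rfl hc, sum_const, nsmul_eq_mul]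
  exact sum_eq_zero fun i hi => by rw [hc i hi, hlog, mul_zero]

noncomputable def condMIEdge {X Y : Type} [Fintype X] [Fintype Y]
    (P : X → Y → ℝ) (t : X → Finset X → ℝ) (w : Finset X) : ℝ :=
  ∑ x : X, ∑ y : Y,
    t x w * P x y *
      Real.logb 2 ((t x w * P x y) * (∑ x' : X, P x' y)
        / ((∑ x' : X, t x' w * P x' y) * P x y))

lemma condMI_eq_sum_condMIEdge {X Y : Type} [Fintype X] [Fintype Y]
    (P : X → Y → ℝ) (t : X → Finset X → ℝ) : condMI P t = ∑ w, condMIEdge P t w := rfl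

def IsTestChannel {X : Type} [Fintype X] (E : Set (Finset X)) (t : X → Finset X → ℝ) : Prop :=
  (∀ x w, 0 ≤ t x w) ∧ (∀ x, ∑ w : Finset X, t x w = 1) ∧
    (∀ x w, t x w ≠ 0 → w ∈ E ∧ x ∈ w)

lemma mul_mul_logb_two_mul_div_self (a c : ℝ) : a * c * Real.logb 2 (2 * a / a) = a * c := by
  rcases eq_or_ne a 0 with rfl | ha
  · simp
  · rw [mul_div_assoc, div_self ha, mul_one, Real.logb_self_eq_one one_lt_two, mul_one]

lemma condMIEdge_P19 {t : Fin 3 → Finset (Fin 3) → ℝ}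
    (hsupp : ∀ x w, t x w ≠ 0 → w ∈ E19 ∧ x ∈ w) (w : Finset (Fin 3)) :
    condMIEdge P19 t w = (∑ x, t x w + klDivUniform w (t · w)) / 6 := by
  by_cases hw : w ∈ E19
  · have hout : ∀ x ∉ w, t x w = 0 := fun x hx => by_contra fun h => hx (hsupp x w h).2
    have hscale : ∀ a s : ℝ, a * (1 / 6) * (1 / 3) / (s * (1 / 6) * (1 / 6)) = 2 * a / s :=
      fun a s => by ring
    simp only [E19, Set.mem_insert_iff, Set.mem_singleton_iff] at hw
    rcases hw with rfl | rfl | rfl <;>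
    · simp only [Fin.forall_fin_succ] at hout
      norm_num [Fin.ext_iff] at hout
      simp only [condMIEdge, klDivUniform, Fin.sum_univ_three]
      norm_num [P19, Fin.ext_iff, hout]
      simp only [← add_mul, hscale, mul_mul_logb_two_mul_div_self]
      ring
  · have hzero : ∀ x, t x w = 0 := fun x => by_contra fun h => hw (hsupp x w h).1
    simp [condMIEdge, klDivUniform, hzero]

lemma condMI_P19 {t : Fin 3 → Finset (Fin 3) → ℝ}
    (hsum : ∀ x, ∑ w : Finset (Fin 3), t x w = 1)
    (hsupp : ∀ x w, t x w ≠ 0 → w ∈ E19 ∧ x ∈ w) :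
    condMI P19 t = 1 / 2 + (∑ w, klDivUniform w (t · w)) / 6 := by
  have hmass : ∑ w : Finset (Fin 3), ∑ x, t x w = 3 := by
    rw [sum_comm]; simp [hsum]
  simp only [condMI_eq_sum_condMIEdge, condMIEdge_P19 hsupp, ← sum_div, sum_add_distrib, hmass]
  ring

lemma t19_isTestChannel : IsTestChannel E19 t19 := by
  refine ⟨fun x w => ?_, fun x => ?_, fun x w h => ?_⟩
  · unfold t19; split <;> norm_num
  · rw [← sum_subset (subset_univ ({{0, 1}, {1, 2}, {0, 2}} : Finset (Finset (Fin 3))))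
      fun w _ hw => by simp_all [t19, E19]]
    rw [sum_insert (by decide), sum_insert (by decide), sum_singleton]
    fin_cases x <;> norm_num [t19, E19, Fin.ext_iff]
  · by_contra hw
    exact h (if_neg hw)

lemma condMI_t19 : condMI P19 t19 = 1 / 2 := by
  rw [condMI_P19 t19_isTestChannel.2.1 t19_isTestChannel.2.2]
  have hconst : ∀ w, ∀ x ∈ w, t19 x w = if w ∈ E19 then 1 / 2 else 0 := fun w x hx => by
    simp [t19, hx]
  simp [klDivUniform_eq_zero_of_forall_eq (hconst _)]

lemma one_half_le_condMI_P19 {t : Fin 3 → Finset (Fin 3) → ℝ} (ht : IsTestChannel E19 t) :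
    1 / 2 ≤ condMI P19 t := by
  obtain ⟨hnonneg, hsum, hsupp⟩ := ht
  rw [condMI_P19 hsum hsupp]
  have hdiv : 0 ≤ ∑ w, klDivUniform w (t · w) :=
    sum_nonneg fun w _ => klDivUniform_nonneg fun x _ => hnonneg x w
  linarith

theorem hypergraph_entropy_example :
    hypEnt P19 E19 = 1 / 2 ∧
    ((∀ x w, 0 ≤ t19 x w) ∧ (∀ x, ∑ w : Finset (Fin 3), t19 x w = 1) ∧
      (∀ x w, t19 x w ≠ 0 → w ∈ E19 ∧ x ∈ w)) ∧
    condMI P19 t19 = 1 / 2 := by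
  obtain ⟨hnonneg, hsum, hsupp⟩ := t19_isTestChannel
  refine ⟨IsLeast.csInf_eq ⟨?_, ?_⟩, ⟨hnonneg, hsum, hsupp⟩, condMI_t19⟩
  · exact ⟨t19, hnonneg, hsum, hsupp, condMI_t19.symm⟩
  · rintro r ⟨t, hnonneg, hsum, hsupp, rfl⟩
    exact one_half_le_condMI_P19 ⟨hnonneg, hsum, hsupp⟩

end Stmt19
end
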